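/- arXiv:2505.19850 — 2 statements merged into one kernel-verified Lean document; each statement's English description precedes it below -/
import Mathlib

section
/- Let G be a type with elements s0 and g⋆, and let d : G → G → ℝ satisfy the triangle inequality d(a,c) ≤ d(a,b) + d(b,c) for all a,b,c ∈ G. Assume G contains optimal paths toward g⋆: for every g' ∈ G and every real t with 0 ≤ t ≤ d(g',g⋆) there exists g ∈ G with d(g',g) = t and d(g',g⋆) = d(g',g) + d(g,g⋆). Fix reals α ≥ 0 and ε > 0, and define r : G → ℝ by r(g) = -α·d(s0,g) - (1-α)·d(g,g⋆). Then for every g' ∈ G with d(g',g⋆) ≥ ε there exists g ∈ G with d(g',g) = ε and r(g) - r(g') ≥ (1-2α)·ε. -/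
/-- Lemma 1 (lem:1): existence of an ε-step along the optimal path improving the
DISCOVER reward by at least (1-2α)ε. -/
theorem discover_improvement_step {G : Type*} (s0 gstar : G) (d : G → G → ℝ)
    (htri : ∀ a b c : G, d a c ≤ d a b + d b c)
    (hpath : ∀ g' : G, ∀ t : ℝ, 0 ≤ t → t ≤ d g' gstar →
      ∃ g : G, d g' g = t ∧ d g' gstar = d g' g + d g gstar)
    (α ε : ℝ) (hα : 0 ≤ α) (hε : 0 < ε)
    (r : G → ℝ) (hr : ∀ g : G, r g = -α * d s0 g - (1 - α) * d g gstar) :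
    ∀ g' : G, ε ≤ d g' gstar →
      ∃ g : G, d g' g = ε ∧ (1 - 2 * α) * ε ≤ r g - r g' := by
  intro g' hg'
  obtain ⟨g, hgε, hsum⟩ := hpath g' ε hε.le hg'
  refine ⟨g, hgε, ?_⟩
  have h1 := htri s0 g' g
  rw [hr g, hr g']
  nlinarith [h1, hsum, hgε]
end

section
/- Let 0 < α ≤ 1, 0 < δ < 1, and let T_ach be a positive natural number with T_ach ≥ 8·log(1/δ). Set γ = √(2·log(1/δ)/T_ach) and T = ⌈(1+γ)²·T_ach/α⌉. Let X₁,…,X_T be independent identically distributed Bernoulli(α) random variables (taking values in {0,1}) on a probability space, and let S_T = ∑_{t=1}^{T} X_t. Then P(S_T ≥ T_ach) ≥ 1 - δ. -/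
open MeasureTheory ProbabilityTheory Real

/-- Lemma 3 (lem:3): with `T = ⌈(1+γ)² T_ach / α⌉` i.i.d. Bernoulli(α) trials, at least
`T_ach` successes occur with probability at least `1 - δ`. -/
theorem bernoulli_achieval_bound {Ω : Type*} [MeasurableSpace Ω] (P : Measure Ω)
    [IsProbabilityMeasure P]
    (α δ : ℝ) (hα0 : 0 < α) (hα1 : α ≤ 1) (hδ0 : 0 < δ) (hδ1 : δ < 1)
    (Tach : ℕ) (hTachPos : 0 < Tach) (hTach : 8 * Real.log (1 / δ) ≤ (Tach : ℝ))
    (γ : ℝ) (hγ : γ = Real.sqrt (2 * Real.log (1 / δ) / (Tach : ℝ)))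
    (T : ℕ) (hT : T = ⌈(1 + γ) ^ 2 * (Tach : ℝ) / α⌉₊)
    (X : Fin T → Ω → ℝ)
    (hmeas : ∀ t, Measurable (X t))
    (hval : ∀ t ω, X t ω = 0 ∨ X t ω = 1)
    (hbern : ∀ t, P {ω | X t ω = 1} = ENNReal.ofReal α)
    (hindep : iIndepFun X P) :
    ENNReal.ofReal (1 - δ) ≤ P {ω | (Tach : ℝ) ≤ ∑ t : Fin T, X t ω} := by
  -- Basic quantities
  set L : ℝ := Real.log (1 / δ) with hLdef
  have hL0 : 0 < L := Real.log_pos (by rw [lt_div_iff₀ hδ0]; linarith)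
  have haN : (0 : ℝ) < (Tach : ℝ) := by exact_mod_cast hTachPos
  set a : ℝ := (Tach : ℝ) with hadef
  have hγ0 : 0 < γ := by
    rw [hγ]
    exact Real.sqrt_pos.mpr (by positivity)
  have hγsq : γ ^ 2 = 2 * L / a := by
    rw [hγ]; exact Real.sq_sqrt (by positivity)
  -- μ' = T * α ≥ (1+γ)^2 * a
  set M : ℝ := (1 + γ) ^ 2 * a with hMdef
  have hM0 : 0 < M := by positivity
  have haM : a ≤ M := by
    have : (1:ℝ) ≤ (1 + γ) ^ 2 := by nlinarith
    nlinarith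
  set μ' : ℝ := (T : ℝ) * α with hμdef
  have hMμ : M ≤ μ' := by
    have h1 : M / α ≤ (T : ℝ) := by
      rw [hT]; exact Nat.le_ceil _
    have := mul_le_mul_of_nonneg_right h1 hα0.le
    rwa [div_mul_cancel₀ _ hα0.ne'] at this
  have haμ : a ≤ μ' := haM.trans hMμ
  have hμ0 : 0 < μ' := lt_of_lt_of_le haN haμ
  -- Chernoff parameter
  set s : ℝ := Real.log (μ' / a) with hsdef
  have hs0 : 0 ≤ s := Real.log_nonneg ((one_le_div haN).mpr haμ)
  have hexp_s : Real.exp (-s) = a / μ' := by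
    rw [hsdef, ← Real.log_inv, Real.exp_log (by positivity)]
    rw [inv_div]
  -- pointwise rewriting of exp(-s * X i ω)
  have hpt : ∀ i : Fin T, (fun ω => Real.exp (-s * X i ω))
      = fun ω => 1 + (Real.exp (-s) - 1) * X i ω := by
    intro i; funext ω
    rcases hval i ω with h | h <;> simp [h]
  -- integrability of each X i
  have hXint : ∀ i : Fin T, Integrable (X i) P := by
    intro i
    refine Integrable.mono' (integrable_const (1:ℝ)) (hmeas i).aestronglyMeasurable ?_
    filter_upwards with ω
    rcases hval i ω with h | h <;> simp [h]
  have hint : ∀ i : Fin T, Integrable (fun ω => Real.exp (-s * X i ω)) P := by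
    intro i
    rw [hpt i]
    exact (integrable_const (1:ℝ)).add ((hXint i).const_mul _)
  -- expectation of X i
  have hEX : ∀ i : Fin T, ∫ ω, X i ω ∂P = α := by
    intro i
    have hXind : X i = Set.indicator {ω | X i ω = 1} (fun _ => (1:ℝ)) := by
      funext ω
      rcases hval i ω with h | h <;>
        simp [Set.indicator, h, Set.mem_setOf_eq]
    have hms : MeasurableSet {ω | X i ω = 1} := (hmeas i) (measurableSet_singleton 1)
    calc ∫ ω, X i ω ∂P = ∫ ω, Set.indicator {ω | X i ω = 1} (fun _ => (1:ℝ)) ω ∂P := by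
          rw [← hXind]
      _ = (P {ω | X i ω = 1}).toReal := by
          rw [MeasureTheory.integral_indicator hms]
          simp
          rfl
      _ = α := by rw [hbern i, ENNReal.toReal_ofReal hα0.le]
  -- mgf of each X i at -s
  have hmgf : ∀ i : Fin T, mgf (X i) P (-s) = 1 + (Real.exp (-s) - 1) * α := by
    intro i
    rw [mgf]
    rw [show (fun ω => Real.exp (-s * X i ω)) = fun ω => 1 + (Real.exp (-s) - 1) * X i ω
      from hpt i]
    rw [integral_add (integrable_const _) ((hXint i).const_mul _),
      integral_const, integral_const_mul, hEX i]
    simp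
  -- mgf of the sum
  set S : Ω → ℝ := ∑ i : Fin T, X i with hSdef
  have hSapp : ∀ ω, S ω = ∑ t : Fin T, X t ω := by
    intro ω; rw [hSdef, Finset.sum_apply]
  set c : ℝ := 1 + (Real.exp (-s) - 1) * α with hcdef
  have hmgfS : mgf S P (-s) = c ^ T := by
    rw [hSdef, hindep.mgf_sum hmeas Finset.univ]
    simp [hmgf, hcdef]
  -- Chernoff bound
  have hintS : Integrable (fun ω => Real.exp (-s * S ω)) P := by
    rw [hSdef]
    exact hindep.integrable_exp_mul_sum hmeas (fun i _ => hint i)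
  have hcher : (P {ω | S ω ≤ a}).toReal ≤ Real.exp (s * a) * c ^ T := by
    have := measure_le_le_exp_mul_mgf (X := S) (μ := P) (t := -s) a
      (neg_nonpos.mpr hs0) hintS
    rwa [neg_neg, hmgfS] at this
  -- bound c^T ≤ exp(a - μ')
  have hc0 : 0 ≤ c := by
    have h1 : 0 < Real.exp (-s) := Real.exp_pos _
    nlinarith
  have hcT : c ^ T ≤ Real.exp (a - μ') := by
    have h1 : c ≤ Real.exp ((Real.exp (-s) - 1) * α) := by
      have := Real.add_one_le_exp ((Real.exp (-s) - 1) * α)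
      linarith
    calc c ^ T ≤ (Real.exp ((Real.exp (-s) - 1) * α)) ^ T :=
          pow_le_pow_left₀ hc0 h1 T
      _ = Real.exp ((T : ℝ) * ((Real.exp (-s) - 1) * α)) := by
          rw [← Real.exp_nat_mul]
      _ = Real.exp (a - μ') := by
          congr 1
          rw [hexp_s]
          field_simp
          ring
  -- the exponent bound:  s*a + a - μ' ≤ -2L
  have hexponent : s * a + (a - μ') ≤ -(2 * L) := by
    have hlog1 : Real.log (μ' / M) ≤ μ' / M - 1 :=
      Real.log_le_sub_one_of_pos (by positivity)
    have hlog2 : Real.log (1 + γ) ≤ γ := by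
      have := Real.log_le_sub_one_of_pos (by positivity : (0:ℝ) < 1 + γ)
      linarith
    have hsplit : s = Real.log (μ' / M) + 2 * Real.log (1 + γ) := by
      rw [hsdef]
      have : μ' / a = (μ' / M) * (1 + γ) ^ 2 := by
        rw [hMdef]; field_simp
      rw [this, Real.log_mul (by positivity) (by positivity),
        Real.log_pow]
      push_cast; ring
    have h1 : a * Real.log (μ' / M) ≤ μ' - M := by
      have h2 : a * Real.log (μ' / M) ≤ a * (μ' / M - 1) :=
        mul_le_mul_of_nonneg_left hlog1 haN.le
      have h3 : a * (μ' / M - 1) ≤ M * (μ' / M - 1) := by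
        have h0 : 0 ≤ μ' / M - 1 := by
          rw [sub_nonneg, le_div_iff₀ hM0]; linarith
        exact mul_le_mul_of_nonneg_right haM h0
      have h4 : M * (μ' / M - 1) = μ' - M := by field_simp
      linarith
    have haγ : a * γ ^ 2 = 2 * L := by
      rw [hγsq]; field_simp
    have h5 : a * Real.log (1 + γ) ≤ a * γ := mul_le_mul_of_nonneg_left hlog2 haN.le
    have h6 : s * a ≤ (μ' - M) + 2 * (a * γ) := by
      have heq : s * a = a * Real.log (μ' / M) + 2 * (a * Real.log (1 + γ)) := by
        rw [hsplit]; ring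
      linarith
    have hfin : a + 2 * (a * γ) - M = -(a * γ ^ 2) := by rw [hMdef]; ring
    linarith
  -- put it together: P {S ≤ a} ≤ δ
  have hδbound : (P {ω | S ω ≤ a}).toReal ≤ δ := by
    have h1 : Real.exp (s * a) * c ^ T ≤ Real.exp (s * a + (a - μ')) := by
      rw [Real.exp_add]
      exact mul_le_mul_of_nonneg_left hcT (Real.exp_pos _).le
    have h2 : Real.exp (s * a + (a - μ')) ≤ Real.exp (-(2 * L)) :=
      Real.exp_le_exp.mpr hexponent
    have h3 : Real.exp (-(2 * L)) = δ ^ 2 := by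
      rw [hLdef, one_div, Real.log_inv]
      rw [show -(2 * -Real.log δ) = (2:ℕ) * Real.log δ by push_cast; ring]
      rw [Real.exp_nat_mul, Real.exp_log hδ0]
    have h4 : δ ^ 2 ≤ δ := by
      calc δ ^ 2 = δ * δ := sq δ
        _ ≤ 1 * δ := mul_le_mul_of_nonneg_right hδ1.le hδ0.le
        _ = δ := one_mul δ
    have h5 : Real.exp (-(2 * L)) ≤ δ := by rw [h3]; exact h4
    exact hcher.trans (h1.trans (h2.trans h5))
  -- final measure manipulation
  have hPle : P {ω | S ω ≤ a} ≤ ENNReal.ofReal δ := by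
    rw [← ENNReal.ofReal_toReal (measure_ne_top P _)]
    exact ENNReal.ofReal_le_ofReal hδbound
  have hunion : (Set.univ : Set Ω) ⊆ {ω | a ≤ S ω} ∪ {ω | S ω ≤ a} := by
    intro ω _
    rcases le_total a (S ω) with h | h
    · exact Or.inl h
    · exact Or.inr h
  have hcover : (1 : ENNReal) ≤ P {ω | a ≤ S ω} + P {ω | S ω ≤ a} := by
    calc (1 : ENNReal) = P Set.univ := (measure_univ).symm
      _ ≤ P ({ω | a ≤ S ω} ∪ {ω | S ω ≤ a}) := measure_mono hunion
      _ ≤ P {ω | a ≤ S ω} + P {ω | S ω ≤ a} := measure_union_le _ _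
  have hkey : ENNReal.ofReal (1 - δ) ≤ P {ω | a ≤ S ω} := by
    have h1 : ENNReal.ofReal (1 - δ) + ENNReal.ofReal δ = 1 := by
      rw [← ENNReal.ofReal_add (by linarith) hδ0.le]
      norm_num
    have h2 : P {ω | a ≤ S ω} + P {ω | S ω ≤ a} ≤ P {ω | a ≤ S ω} + ENNReal.ofReal δ :=
      add_le_add_right hPle _
    have h3 : ENNReal.ofReal (1 - δ) + ENNReal.ofReal δ
        ≤ P {ω | a ≤ S ω} + ENNReal.ofReal δ := by
      rw [h1]; exact hcover.trans h2
    exact (ENNReal.add_le_add_iff_right ENNReal.ofReal_ne_top).mp h3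
  have : {ω | a ≤ S ω} = {ω | (Tach : ℝ) ≤ ∑ t : Fin T, X t ω} := by
    ext ω; simp [hSapp ω, hadef]
  rwa [this] at hkey
end
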